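/- arXiv:2209.01323 — 2 statements merged into one kernel-verified Lean document; each statement's English description precedes it below -/
import Mathlib

section
/- Let $f \in L^p(S, \alpha)$, i.e. $\int_S |f|^p (1-y^2)^{-\alpha}\,dA < \infty$ on the strip $S = \{x+iy : |y| \le 1\}$. Then $f \in L^p(S,\alpha)$ if and only if $\int_{-\infty}^{\infty}\left(\int_{C_t} |f(z)|^p (1-y^2)^{-(\alpha - 1/2)}\,ds\right) dt < \infty$, where $C_t$ is the unit circle centered at $t \in \mathbb{R}$ and $ds$ is arclength on $C_t$. -/
/-!
Write `G y = (∫ |f(x + iy)|^p dx) (1 - y²)^{-α}`. Fubini turns the strip integral into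
`∫_{-1}^{1} G`. On the circle side, Tonelli and translation invariance in `t` turn the iterated
integral into `∫_0^{2π} G(sin θ) |cos θ| dθ`, because `(1 - sin² θ)^{1/2} = |cos θ|`. The
substitution `y = sin θ` on the monotone branches `[kπ - π/2, kπ + π/2]` of `sin` bounds this
between `∫_{-1}^{1} G` and three times it.
-/

open MeasureTheory Filter Set Complex Real
open scoped ENNReal

theorem Complex.setLIntegral_preimage_im_mul {F : ℂ → ℝ≥0∞} (hF : Measurable F)
    {w : ℝ → ℝ≥0∞} (hw : Measurable w) (s : Set ℝ) :
    ∫⁻ z in im ⁻¹' s, F z * w z.im = ∫⁻ y in s, (∫⁻ x : ℝ, F (x + y * I)) * w y := by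
  have hemb := measurableEquivRealProd.symm.measurableEmbedding
  rw [← (volume_preserving_equiv_real_prod.symm).setLIntegral_comp_preimage_emb hemb]
  have hpre : measurableEquivRealProd.symm ⁻¹' (im ⁻¹' s) = univ ×ˢ s := by ext; simp
  rw [hpre, Measure.volume_eq_prod, ← Measure.prod_restrict, Measure.restrict_univ,
    lintegral_prod_symm _ (by fun_prop)]
  refine lintegral_congr fun y => ?_
  simp only [measurableEquivRealProd_symm_apply, mk_eq_add_mul_I, add_im, ofReal_im, mul_I_im,
    ofReal_re, zero_add]
  exact lintegral_mul_const _ (hF.comp (measurable_ofReal.add_const _))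

theorem lintegral_setLIntegral_add_exp_mul_I_mul {F : ℂ → ℝ≥0∞} (hF : Measurable F)
    {w : ℝ → ℝ≥0∞} (hw : Measurable w) (s : Set ℝ) :
    ∫⁻ t : ℝ, ∫⁻ θ in s, F (t + exp (θ * I)) * w θ
      = ∫⁻ θ in s, (∫⁻ x : ℝ, F (x + Real.sin θ * I)) * w θ := by
  have hcircle : ∀ t θ : ℝ, (t : ℂ) + exp (θ * I) = ↑(t + Real.cos θ) + Real.sin θ * I := by
    intro t θ
    rw [exp_mul_I, ← ofReal_cos, ← ofReal_sin]
    push_cast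
    ring
  simp only [hcircle]
  rw [lintegral_lintegral_swap (by fun_prop)]
  refine lintegral_congr fun θ => ?_
  rw [lintegral_mul_const _ (by fun_prop),
    lintegral_add_right_eq_self (fun x : ℝ => F (x + Real.sin θ * I))]

theorem Real.ae_cos_ne_zero : ∀ᵐ θ : ℝ, cos θ ≠ 0 := by
  refine measure_mono_null (fun θ (hθ : ¬cos θ ≠ 0) => ?_)
    ((countable_range fun k : ℤ => (2 * k + 1) * π / 2).measure_zero volume)
  obtain ⟨k, hk⟩ := cos_eq_zero_iff.mp (not_not.mp hθ)
  exact ⟨k, hk.symm⟩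

theorem Real.abs_cos_mul_one_sub_sin_sq_rpow {θ : ℝ} (hθ : cos θ ≠ 0) (α : ℝ) :
    |cos θ| * (1 - sin θ ^ 2) ^ (-α) = (1 - sin θ ^ 2) ^ (-(α - 1 / 2)) := by
  have hpos : 0 < 1 - sin θ ^ 2 := by rw [← cos_sq']; positivity
  rw [← sqrt_sq_eq_abs, cos_sq', sqrt_eq_rpow, ← rpow_add hpos]
  ring_nf

theorem Real.bijOn_sin_Icc_add_int_mul_pi (k : ℤ) :
    BijOn sin (Icc (-(π / 2) + k * π) (π / 2 + k * π)) (Icc (-1) 1) := by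
  have hsq : ((-1 : ℝ) ^ k) * (-1) ^ k = 1 := by
    rw [← mul_zpow, neg_one_mul, neg_neg, one_zpow]
  have hshift : ∀ θ ∈ Icc (-(π / 2) + k * π) (π / 2 + k * π),
      θ - k * π ∈ Icc (-(π / 2)) (π / 2) := fun θ hθ =>
    ⟨by linarith [hθ.1], by linarith [hθ.2]⟩
  refine ⟨mapsTo_sin _, fun a ha b hb hab => ?_, fun y hy => ?_⟩
  · have : sin (a - k * π) = sin (b - k * π) := by
      rw [sin_sub_int_mul_pi, sin_sub_int_mul_pi, hab]
    linarith [injOn_sin (hshift a ha) (hshift b hb) this]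
  · have hy' : (-1) ^ k * y ∈ Icc (-1 : ℝ) 1 := by
      rw [mem_Icc, ← abs_le, abs_mul, abs_zpow, abs_neg, abs_one, one_zpow, one_mul, abs_le]
      exact hy
    obtain ⟨x, hx, hxy⟩ := surjOn_sin hy'
    refine ⟨x + k * π, ⟨by linarith [hx.1], by linarith [hx.2]⟩, ?_⟩
    rw [sin_add_int_mul_pi, hxy, ← mul_assoc, hsq, one_mul]

theorem setLIntegral_Icc_abs_cos_mul_comp_sin (H : ℝ → ℝ≥0∞) (k : ℤ) :
    ∫⁻ θ in Icc (-(π / 2) + k * π) (π / 2 + k * π), ENNReal.ofReal |cos θ| * H (sin θ)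
      = ∫⁻ y in Icc (-1) 1, H y := by
  have hbij := bijOn_sin_Icc_add_int_mul_pi k
  rw [← hbij.image_eq, lintegral_image_eq_lintegral_abs_deriv_mul measurableSet_Icc
    (fun θ _ => (Real.hasDerivAt_sin θ).hasDerivWithinAt) hbij.injOn]

theorem setLIntegral_Icc_abs_cos_mul_comp_sin_lt_top_iff (H : ℝ → ℝ≥0∞) :
    (∫⁻ y in Icc (-1) 1, H y < ∞) ↔
      ∫⁻ θ in Icc 0 (2 * π), ENNReal.ofReal |cos θ| * H (sin θ) < ∞ := by
  set F : ℝ → ℝ≥0∞ := fun θ => ENNReal.ofReal |cos θ| * H (sin θ)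
  set I : ℤ → Set ℝ := fun k => Icc (-(π / 2) + k * π) (π / 2 + k * π)
  have hI : ∀ k, ∫⁻ θ in I k, F θ = ∫⁻ y in Icc (-1) 1, H y :=
    setLIntegral_Icc_abs_cos_mul_comp_sin H
  have hπ := pi_pos
  constructor
  · intro hL
    have hcover : Icc 0 (2 * π) ⊆ I 0 ∪ I 1 ∪ I 2 := by
      intro θ ⟨h0, h2π⟩
      simp only [I, Int.cast_zero, Int.cast_one, Int.cast_ofNat, mem_union, mem_Icc]
      rcases le_or_gt θ (π / 2) with h | h
      · exact .inl (.inl ⟨by linarith, by linarith⟩)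
      rcases le_or_gt θ (3 * π / 2) with h' | h'
      · exact .inl (.inr ⟨by linarith, by linarith⟩)
      · exact .inr ⟨by linarith, by linarith⟩
    calc ∫⁻ θ in Icc 0 (2 * π), F θ
        ≤ ∫⁻ θ in I 0 ∪ I 1 ∪ I 2, F θ := lintegral_mono_set hcover
      _ ≤ (∫⁻ θ in I 0, F θ) + (∫⁻ θ in I 1, F θ) + ∫⁻ θ in I 2, F θ :=
        (lintegral_union_le _ _ _).trans (add_le_add (lintegral_union_le _ _ _) le_rfl)
      _ < ∞ := by simp only [hI, hL, ENNReal.add_lt_top, and_self]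
  · intro hR
    have hsub : I 1 ⊆ Icc 0 (2 * π) := by
      intro θ ⟨h1, h2⟩
      simp only [Int.cast_one, one_mul] at h1 h2
      exact ⟨by linarith, by linarith⟩
    calc ∫⁻ y in Icc (-1) 1, H y = ∫⁻ θ in I 1, F θ := (hI 1).symm
      _ ≤ ∫⁻ θ in Icc 0 (2 * π), F θ := lintegral_mono_set hsub
      _ < ∞ := hR

theorem Lp_strip_iff_circle_general (p α : ℝ)
    (f : ℂ → ℂ) (hf : Measurable f) :
    (∫⁻ z in {z : ℂ | |z.im| ≤ 1},
        ENNReal.ofReal (‖f z‖ ^ p * (1 - z.im ^ 2) ^ (-α)) < ⊤) ↔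
    (∫⁻ t : ℝ, ∫⁻ θ in Icc (0:ℝ) (2 * π),
        ENNReal.ofReal (‖f (t + Complex.exp (θ * Complex.I))‖ ^ p *
          (1 - (Real.sin θ) ^ 2) ^ (-(α - 1/2))) < ⊤) := by
  have hF : Measurable fun z => ENNReal.ofReal (‖f z‖ ^ p) := by fun_prop
  have hstrip : {z : ℂ | |z.im| ≤ 1} = im ⁻¹' Icc (-1) 1 := by ext; simp [abs_le]
  simp only [ENNReal.ofReal_mul (rpow_nonneg (norm_nonneg _) _), hstrip]
  rw [setLIntegral_preimage_im_mul hF (w := fun y => ENNReal.ofReal ((1 - y ^ 2) ^ (-α)))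
      (by fun_prop),
    lintegral_setLIntegral_add_exp_mul_I_mul hF (by fun_prop),
    setLIntegral_Icc_abs_cos_mul_comp_sin_lt_top_iff]
  refine Iff.of_eq (congrArg (· < ∞) (setLIntegral_congr_fun_ae measurableSet_Icc ?_))
  filter_upwards [ae_cos_ne_zero] with θ hθ _
  rw [← abs_cos_mul_one_sub_sin_sq_rpow hθ, ENNReal.ofReal_mul (abs_nonneg _)]
  ring

/-- `f ∈ L^p(S, α)` if and only if the iterated integral of `|f|^p (1-y²)^{-(α-1/2)}`
over the circles `C_t = {z : |z - t| = 1}` (in arclength, parametrized by angle) and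
then over `t ∈ ℝ` is finite.  Here `S = {x+iy : |y| ≤ 1}`. -/
theorem Lp_strip_iff_circle (p α : ℝ) (hp : 1 < p) (hα0 : 1/2 ≤ α) (hα1 : α < 1)
    (f : ℂ → ℂ) (hf : Measurable f) :
    (∫⁻ z in {z : ℂ | |z.im| ≤ 1},
        ENNReal.ofReal (‖f z‖ ^ p * (1 - z.im ^ 2) ^ (-α)) < ⊤) ↔
    (∫⁻ t : ℝ, ∫⁻ θ in Icc (0:ℝ) (2 * π),
        ENNReal.ofReal (‖f (t + Complex.exp (θ * Complex.I))‖ ^ p *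
          (1 - (Real.sin θ) ^ 2) ^ (-(α - 1/2))) < ⊤) :=
  Lp_strip_iff_circle_general p α f hf
end

section
/- Let $F$ be an entire function on $\mathbb{C}$ such that $\sup_{y > 0} \int_{-\infty}^{\infty} |F(x+iy)| \frac{dx}{1+x^2} < \infty$ and $\sup_{y < 0} \int_{-\infty}^{\infty} |F(x+iy)| \frac{dx}{1+x^2} < \infty$ (i.e. $F$ belongs to the $H^1$ spaces of both the upper and lower half-planes with respect to the measure $\frac{dt}{1+t^2}$). Then $F$ is constant. -/
/-!
Averaging the bounds on horizontal lines over `|y| ≤ K` bounds `∫ |F|` over the disc of radius `K`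
by `O(K³)`. In polar coordinates around `z`, with `R = |z| + 1`, this yields a circle of radius
`r ∈ [R, 2R]` on which `∫ |F| dθ = O(R)`, and Cauchy's estimate on that circle bounds `F'(z)`
uniformly in `z`. By Liouville `F` is affine, and the weighted line integrals of a nonconstant
affine function grow linearly in `y`.
-/

open MeasureTheory Complex Set Metric Bornology
open scoped ENNReal NNReal Real

theorem setLIntegral_im_preimage {f : ℂ → ℝ≥0∞} (hf : Measurable f) (s : Set ℝ) :
    ∫⁻ w in im ⁻¹' s, f w = ∫⁻ y in s, ∫⁻ x : ℝ, f (x + y * I) := by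
  have hpres := volume_preserving_equiv_real_prod.symm.setLIntegral_comp_preimage_emb
    measurableEquivRealProd.symm.measurableEmbedding f (im ⁻¹' s)
  have hset : measurableEquivRealProd.symm ⁻¹' (im ⁻¹' s) = univ ×ˢ s := by ext; simp
  rw [← hpres, hset, Measure.volume_eq_prod, ← Measure.prod_restrict, Measure.restrict_univ,
    lintegral_prod_symm (fun p => f (measurableEquivRealProd.symm p))
      (hf.comp measurableEquivRealProd.symm.measurable).aemeasurable]
  simp [mk_eq_add_mul_I]

theorem add_polarCoord_symm_eq_circleMap (c : ℂ) (p : ℝ × ℝ) :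
    c + Complex.polarCoord.symm p = circleMap c p.1 p.2 := by
  simp [circleMap, Complex.exp_mul_I]

theorem lintegral_eq_lintegral_circleMap {g : ℂ → ℝ≥0∞} (hg : Measurable g) (c : ℂ) :
    ∫⁻ w, g w = ∫⁻ r in Ioi 0, ENNReal.ofReal r * ∫⁻ θ in Ioo (-π) π, g (circleMap c r θ) := by
  have hmeas : Measurable fun p : ℝ × ℝ => g (circleMap c p.1 p.2) :=
    hg.comp (by simp only [circleMap]; fun_prop)
  rw [← lintegral_add_left_eq_self g c, ← Complex.lintegral_comp_polarCoord_symm, polarCoord_target,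
    Measure.volume_eq_prod, ← Measure.prod_restrict]
  simp_rw [add_polarCoord_symm_eq_circleMap, smul_eq_mul]
  rw [lintegral_prod (fun p : ℝ × ℝ => ENNReal.ofReal p.1 * g (circleMap c p.1 p.2))
    (measurable_fst.ennreal_ofReal.mul hmeas).aemeasurable]
  refine lintegral_congr fun r => ?_
  dsimp only
  exact lintegral_const_mul _ (hmeas.comp measurable_prodMk_left)

theorem exists_radius_lintegral_circleMap_le {g : ℂ → ℝ≥0∞} (hg : Measurable g) (c : ℂ)
    {R : ℝ} (hR : 0 < R) :
    ∃ r ∈ Icc R (2 * R), ENNReal.ofReal (R ^ 2) * ∫⁻ θ in Ioo (-π) π, g (circleMap c r θ)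
      ≤ ∫⁻ w in closedBall c (2 * R), g w := by
  set G : ℝ → ℝ≥0∞ := fun r => ∫⁻ θ in Ioo (-π) π, g (circleMap c r θ)
  have hmeas : Measurable fun p : ℝ × ℝ => g (circleMap c p.1 p.2) :=
    hg.comp (by simp only [circleMap]; fun_prop)
  have hG : Measurable G := hmeas.lintegral_prod_right'
  have hvol : volume (Icc R (2 * R)) = ENNReal.ofReal R := by
    rw [Real.volume_Icc]; ring_nf
  obtain ⟨r, hr, hGr⟩ := exists_le_setLAverage (μ := volume) (s := Icc R (2 * R))
    (by simp [hvol, hR]) (by simp [hvol]) hG.aemeasurable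
  refine ⟨r, hr, ?_⟩
  have hG_eq : ∀ s ∈ Icc R (2 * R),
      G s = ∫⁻ θ in Ioo (-π) π, (closedBall c (2 * R)).indicator g (circleMap c s θ) := by
    intro s hs
    refine setLIntegral_congr_fun measurableSet_Ioo fun θ _ => (indicator_of_mem ?_ g).symm
    exact closedBall_subset_closedBall hs.2 (circleMap_mem_closedBall c (hR.le.trans hs.1) θ)
  calc ENNReal.ofReal (R ^ 2) * G r
      = ENNReal.ofReal R * (ENNReal.ofReal R * G r) := by
        rw [← mul_assoc, ← ENNReal.ofReal_mul hR.le, sq]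
    _ ≤ ENNReal.ofReal R * ∫⁻ s in Icc R (2 * R), G s := by
        gcongr
        rw [setLAverage_eq, hvol] at hGr
        exact ENNReal.mul_le_of_le_div' hGr
    _ = ∫⁻ s in Icc R (2 * R), ENNReal.ofReal R * G s := (lintegral_const_mul _ hG).symm
    _ ≤ ∫⁻ s in Icc R (2 * R), ENNReal.ofReal s *
          ∫⁻ θ in Ioo (-π) π, (closedBall c (2 * R)).indicator g (circleMap c s θ) :=
        setLIntegral_mono' measurableSet_Icc fun s hs => by
          rw [← hG_eq s hs]; gcongr; exact hs.1
    _ ≤ ∫⁻ s in Ioi 0, ENNReal.ofReal s *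
          ∫⁻ θ in Ioo (-π) π, (closedBall c (2 * R)).indicator g (circleMap c s θ) :=
        lintegral_mono_set fun s hs => hR.trans_le hs.1
    _ = ∫⁻ w in closedBall c (2 * R), g w := by
        rw [← lintegral_eq_lintegral_circleMap (hg.indicator measurableSet_closedBall),
          lintegral_indicator measurableSet_closedBall]

section CauchyEstimate

variable {E : Type*} [NormedAddCommGroup E] [NormedSpace ℂ E] [CompleteSpace E]

theorem norm_deriv_le_of_lintegral_circleMap_le {f : ℂ → E} {c : ℂ} {r B : ℝ} (hr : 0 < r)
    (hB : 0 ≤ B) (hf : DiffContOnCl ℂ f (ball c r))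
    (h : ∫⁻ θ in Ioo (-π) π, ‖f (circleMap c r θ)‖ₑ ≤ ENNReal.ofReal B) :
    ‖deriv f c‖ ≤ B / (2 * π * r) := by
  lift r to ℝ≥0 using hr.le
  have hcont : Continuous fun θ => f (circleMap c r θ) :=
    hf.continuousOn.comp_continuous (continuous_circleMap c r) fun θ => by
      rw [closure_ball c hr.ne']
      exact sphere_subset_closedBall (circleMap_mem_sphere c r.2 θ)
  have hint : ∫ θ in 0..2 * π, ‖f (circleMap c r θ)‖ ≤ B := by
    have hperiodic : Function.Periodic (fun θ => ‖f (circleMap c r θ)‖) (2 * π) := fun θ => by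
      simp only [periodic_circleMap c r θ]
    have hshift := hperiodic.intervalIntegral_add_eq 0 (-π)
    rw [zero_add, show -π + 2 * π = π by ring] at hshift
    rw [hshift, intervalIntegral.integral_of_le (by linarith [Real.pi_pos]),
      integral_Ioc_eq_integral_Ioo, integral_norm_eq_lintegral_enorm hcont.aestronglyMeasurable]
    exact ENNReal.toReal_le_of_le_ofReal hB h
  have hcauchy : ‖deriv f c‖ ≤ ‖cauchyPowerSeries f c r 1‖ := by
    rw [(hf.hasFPowerSeriesOnBall hr).hasFPowerSeriesAt.deriv]
    simp
  calc ‖deriv f c‖ ≤ (2 * π)⁻¹ * (∫ θ in 0..2 * π, ‖f (circleMap c r θ)‖) * (r : ℝ)⁻¹ := by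
        simpa using hcauchy.trans (norm_cauchyPowerSeries_le f c r 1)
    _ ≤ (2 * π)⁻¹ * B * (r : ℝ)⁻¹ := by gcongr
    _ = B / (2 * π * r) := by field_simp

theorem norm_deriv_le_of_lintegral_closedBall_le {f : ℂ → E} (hf : Differentiable ℂ f) (c : ℂ)
    {R A : ℝ} (hR : 0 < R) (hA : 0 ≤ A)
    (h : ∫⁻ w in closedBall c (2 * R), ‖f w‖ₑ ≤ ENNReal.ofReal A) :
    ‖deriv f c‖ ≤ A / (2 * π * R ^ 3) := by
  obtain ⟨r, hr, hle⟩ := exists_radius_lintegral_circleMap_le hf.continuous.enorm.measurable c hR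
  have hcircle : ∫⁻ θ in Ioo (-π) π, ‖f (circleMap c r θ)‖ₑ ≤ ENNReal.ofReal (A / R ^ 2) := by
    rw [ENNReal.ofReal_div_of_pos (by positivity),
      ENNReal.le_div_iff_mul_le (by simp [hR.ne']) (by simp), mul_comm]
    exact hle.trans h
  calc ‖deriv f c‖ ≤ A / R ^ 2 / (2 * π * r) :=
        norm_deriv_le_of_lintegral_circleMap_le (hR.trans_le hr.1) (by positivity)
          hf.diffContOnCl hcircle
    _ ≤ A / R ^ 2 / (2 * π * R) := by gcongr; exact hr.1
    _ = A / (2 * π * R ^ 3) := by field_simp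

theorem eq_add_smul_of_isBounded_range_deriv {f : ℂ → E} (hf : Differentiable ℂ f)
    (hb : IsBounded (range (deriv f))) (z : ℂ) : f z = f 0 + z • deriv f 0 := by
  have hconst : ∀ w, deriv f w = deriv f 0 := fun w => hf.deriv.apply_eq_apply_of_bounded hb w 0
  have hg : Differentiable ℂ fun w => f w - w • deriv f 0 :=
    hf.sub (differentiable_id.smul_const _)
  have hg' : ∀ w, deriv (fun w => f w - w • deriv f 0) w = 0 := fun w => by
    rw [deriv_fun_sub (hf w) (differentiableAt_fun_id.smul_const _),
      deriv_smul_const differentiableAt_fun_id]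
    simp [hconst w]
  have := is_const_of_deriv_eq_zero hg hg' z 0
  simpa [sub_eq_iff_eq_add, add_comm] using this

end CauchyEstimate

section WeightedLineNorm

variable {E : Type*} [NormedAddCommGroup E]

noncomputable def weightedLineNorm (F : ℂ → E) (y : ℝ) : ℝ≥0∞ :=
  ∫⁻ x : ℝ, ENNReal.ofReal (‖F (x + y * I)‖ / (1 + x ^ 2))

theorem lintegral_closedBall_le_of_weightedLineNorm_le {F : ℂ → E} (hF : Continuous F)
    {K M : ℝ} (hK : 0 ≤ K) (hM : ∀ y : ℝ, y ≠ 0 → weightedLineNorm F y ≤ ENNReal.ofReal M) :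
    ∫⁻ w in closedBall 0 K, ‖F w‖ₑ ≤ ENNReal.ofReal (2 * K * (1 + K ^ 2) * M) := by
  set g : ℂ → ℝ≥0∞ := fun w => ENNReal.ofReal (‖F w‖ / (1 + w.re ^ 2))
  have hg : Measurable g := by fun_prop
  have hweight : ∀ w ∈ closedBall (0 : ℂ) K, ‖F w‖ₑ ≤ ENNReal.ofReal (1 + K ^ 2) * g w := by
    intro w hw
    have hre := abs_le.mp ((abs_re_le_norm w).trans (mem_closedBall_zero_iff.mp hw))
    have hre2 : w.re ^ 2 ≤ K ^ 2 := sq_le_sq' hre.1 hre.2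
    rw [← ENNReal.ofReal_mul (by positivity), ← ofReal_norm, mul_div_assoc']
    refine ENNReal.ofReal_le_ofReal ((le_div_iff₀ (by positivity)).mpr ?_)
    nlinarith [norm_nonneg (F w)]
  have hstrip : closedBall (0 : ℂ) K ⊆ im ⁻¹' Icc (-K) K := fun w hw =>
    abs_le.mp ((abs_im_le_norm w).trans (mem_closedBall_zero_iff.mp hw))
  have hline : ∀ᵐ y ∂volume.restrict (Icc (-K) K), weightedLineNorm F y ≤ ENNReal.ofReal M := by
    refine ae_restrict_of_ae ?_
    filter_upwards [compl_mem_ae_iff.mpr (measure_singleton (0 : ℝ))] with y hy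
    exact hM y hy
  calc ∫⁻ w in closedBall 0 K, ‖F w‖ₑ
      ≤ ∫⁻ w in closedBall 0 K, ENNReal.ofReal (1 + K ^ 2) * g w :=
        setLIntegral_mono' measurableSet_closedBall hweight
    _ ≤ ∫⁻ w in im ⁻¹' Icc (-K) K, ENNReal.ofReal (1 + K ^ 2) * g w := lintegral_mono_set hstrip
    _ = ENNReal.ofReal (1 + K ^ 2) * ∫⁻ y in Icc (-K) K, weightedLineNorm F y := by
        rw [lintegral_const_mul _ hg, setLIntegral_im_preimage hg]
        simp [g, weightedLineNorm]
    _ ≤ ENNReal.ofReal (1 + K ^ 2) * ∫⁻ _ in Icc (-K) K, ENNReal.ofReal M :=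
        mul_le_mul_right (lintegral_mono_ae hline) _
    _ = ENNReal.ofReal (2 * K * (1 + K ^ 2) * M) := by
        rw [setLIntegral_const, Real.volume_Icc, mul_comm (ENNReal.ofReal M), ← mul_assoc,
          ← ENNReal.ofReal_mul (by positivity), ← ENNReal.ofReal_mul (by nlinarith)]
        ring_nf

variable [NormedSpace ℂ E]

theorem ofReal_le_weightedLineNorm_of_eq_add_smul {f : ℂ → E} {a b : E}
    (hf : ∀ z, f z = a + z • b) (y : ℝ) :
    ENNReal.ofReal ((|y| * ‖b‖ - ‖a‖) / 2) ≤ weightedLineNorm f y := by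
  have hpoint : ∀ x ∈ Icc (0 : ℝ) 1,
      (|y| * ‖b‖ - ‖a‖) / 2 ≤ ‖f (x + y * I)‖ / (1 + x ^ 2) := by
    intro x hx
    have hy : |y| ≤ ‖(x + y * I : ℂ)‖ := by simpa using abs_im_le_norm (x + y * I : ℂ)
    have hlower : |y| * ‖b‖ - ‖a‖ ≤ ‖f (x + y * I)‖ := by
      rw [hf, add_comm]
      calc |y| * ‖b‖ - ‖a‖ ≤ ‖(x + y * I : ℂ) • b‖ - ‖-a‖ := by
            rw [norm_smul, norm_neg]; gcongr
        _ ≤ _ := by simpa using norm_sub_norm_le ((x + y * I : ℂ) • b) (-a)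
    have hx2 : x ^ 2 ≤ 1 := by nlinarith [hx.1, hx.2]
    rw [div_le_div_iff₀ two_pos (by positivity)]
    rcases le_total 0 (|y| * ‖b‖ - ‖a‖) with hD | hD
    · nlinarith [mul_nonneg hD (sub_nonneg.mpr hx2)]
    · nlinarith [norm_nonneg (f (x + y * I)), mul_nonpos_of_nonpos_of_nonneg hD (sq_nonneg x)]
  calc ENNReal.ofReal ((|y| * ‖b‖ - ‖a‖) / 2)
      = ∫⁻ _ in Icc (0 : ℝ) 1, ENNReal.ofReal ((|y| * ‖b‖ - ‖a‖) / 2) := by simp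
    _ ≤ ∫⁻ x in Icc (0 : ℝ) 1, ENNReal.ofReal (‖f (x + y * I)‖ / (1 + x ^ 2)) :=
        setLIntegral_mono' measurableSet_Icc fun x hx => ENNReal.ofReal_le_ofReal (hpoint x hx)
    _ ≤ weightedLineNorm f y := setLIntegral_le_lintegral _ _

theorem eq_zero_of_eq_add_smul_of_weightedLineNorm_le {f : ℂ → E} {a b : E}
    (hf : ∀ z, f z = a + z • b) {C : ℝ}
    (hC : ∀ y : ℝ, 0 < y → weightedLineNorm f y ≤ ENNReal.ofReal C) : b = 0 := by
  by_contra hb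
  have hb' : 0 < ‖b‖ := norm_pos_iff.mpr hb
  set y := (2 * (max C 0 + 1) + ‖a‖) / ‖b‖
  have hy : 0 < y := by positivity
  have hyb : |y| * ‖b‖ = 2 * (max C 0 + 1) + ‖a‖ := by
    rw [abs_of_pos hy, div_mul_cancel₀ _ hb'.ne']
  have := (ofReal_le_weightedLineNorm_of_eq_add_smul hf y).trans (hC y hy)
  rw [hyb, ENNReal.ofReal_le_ofReal_iff'] at this
  rcases this with h | h <;> linarith [le_max_left C 0, le_max_right C 0]

variable [CompleteSpace E]

theorem norm_deriv_le_of_weightedLineNorm_le {F : ℂ → E} (hF : Differentiable ℂ F) {M : ℝ}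
    (hM0 : 0 ≤ M) (hM : ∀ y : ℝ, y ≠ 0 → weightedLineNorm F y ≤ ENNReal.ofReal M) (z : ℂ) :
    ‖deriv F z‖ ≤ 30 * M / π := by
  set R := ‖z‖ + 1
  have hR : 1 ≤ R := by simp [R]
  have hball : closedBall z (2 * R) ⊆ closedBall 0 (3 * R) :=
    closedBall_subset_closedBall' (by simp [R]; linarith [norm_nonneg z])
  have harea := (lintegral_mono_set hball).trans
    (lintegral_closedBall_le_of_weightedLineNorm_le hF.continuous (by positivity) hM)
  calc ‖deriv F z‖ ≤ 2 * (3 * R) * (1 + (3 * R) ^ 2) * M / (2 * π * R ^ 3) :=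
        norm_deriv_le_of_lintegral_closedBall_le hF z (by positivity) (by positivity) harea
    _ = 3 * ((1 + 9 * R ^ 2) / R ^ 2) * M / π := by field_simp; ring
    _ ≤ 3 * 10 * M / π := by
        gcongr
        rw [div_le_iff₀ (by positivity)]
        nlinarith
    _ = 30 * M / π := by norm_num

end WeightedLineNorm

/-- Liouville-type theorem: an entire function belonging to `H¹` of both the upper and
the lower half-plane with respect to the measure `dx/(1+x²)` (i.e. with uniformly
bounded integrals `∫ |F(x+iy)| dx/(1+x²)` over all horizontal lines `y > 0` and all
`y < 0`) is constant. -/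
theorem entire_H1_both_halfPlanes_const (F : ℂ → ℂ) (hF : Differentiable ℂ F)
    (hupper : ∃ C : ℝ, ∀ y : ℝ, 0 < y →
      ∫⁻ x : ℝ, ENNReal.ofReal (‖F (x + y * Complex.I)‖ / (1 + x ^ 2)) ≤ ENNReal.ofReal C)
    (hlower : ∃ C : ℝ, ∀ y : ℝ, y < 0 →
      ∫⁻ x : ℝ, ENNReal.ofReal (‖F (x + y * Complex.I)‖ / (1 + x ^ 2)) ≤ ENNReal.ofReal C) :
    ∀ z w : ℂ, F z = F w := by
  obtain ⟨C₁, h₁⟩ := hupper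
  obtain ⟨C₂, h₂⟩ := hlower
  set M := max (max C₁ C₂) 0
  have hM : ∀ y : ℝ, y ≠ 0 → weightedLineNorm F y ≤ ENNReal.ofReal M := fun y hy =>
    hy.lt_or_gt.elim (fun h => (h₂ y h).trans (ENNReal.ofReal_le_ofReal (by simp [M])))
      (fun h => (h₁ y h).trans (ENNReal.ofReal_le_ofReal (by simp [M])))
  have hbdd : IsBounded (range (deriv F)) := isBounded_iff_forall_norm_le.mpr
    ⟨30 * M / π, forall_mem_range.mpr
      (norm_deriv_le_of_weightedLineNorm_le hF (le_max_right _ _) hM)⟩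
  have haffine := eq_add_smul_of_isBounded_range_deriv hF hbdd
  have hslope := eq_zero_of_eq_add_smul_of_weightedLineNorm_le haffine h₁
  intro z w
  rw [haffine z, haffine w, hslope, smul_zero, smul_zero]
end
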